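/- Let P be a g-weakly 2-absorbing ideal of a G-graded ring R and (x, y, z) a g-triple-zero of P. Then P_g² z = {0}, x P_g² = {0}, and P_g y P_g = {0}. -/
import Mathlib


variable {G R : Type*} [AddGroup G] [DecidableEq G] [Ring R]

/-- A two-sided ideal is graded if it contains all homogeneous components of its elements. -/
def IsGradedIdeal (𝒜 : G → AddSubgroup R) [GradedRing 𝒜] (P : TwoSidedIdeal R) : Prop :=
  ∀ a ∈ P, ∀ g : G, (DirectSum.decompose 𝒜 a g : R) ∈ P

/-- `P` is a `g`-2-absorbing ideal: `P` is a graded ideal with `P_g ≠ R_g`, and for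
`x, y, z ∈ R_g`, `x R_e y R_e z ⊆ P` implies `xy ∈ P` or `yz ∈ P` or `xz ∈ P`. -/
def IsG2Absorbing (𝒜 : G → AddSubgroup R) [GradedRing 𝒜] (g : G) (P : TwoSidedIdeal R) : Prop :=
  IsGradedIdeal 𝒜 P ∧ (∃ x ∈ 𝒜 g, x ∉ P) ∧
    ∀ x y z : R, x ∈ 𝒜 g → y ∈ 𝒜 g → z ∈ 𝒜 g →
      (∀ r s : R, r ∈ 𝒜 0 → s ∈ 𝒜 0 → x * r * y * s * z ∈ P) →
      x * y ∈ P ∨ y * z ∈ P ∨ x * z ∈ P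

/-- `P` is a `g`-weakly 2-absorbing ideal: `P` is a graded ideal with `P_g ≠ R_g`, and for
`x, y, z ∈ R_g`, `0 ≠ x R_e y R_e z ⊆ P` implies `xy ∈ P` or `yz ∈ P` or `xz ∈ P`. -/
def IsGWeakly2Absorbing (𝒜 : G → AddSubgroup R) [GradedRing 𝒜] (g : G)
    (P : TwoSidedIdeal R) : Prop :=
  IsGradedIdeal 𝒜 P ∧ (∃ x ∈ 𝒜 g, x ∉ P) ∧
    ∀ x y z : R, x ∈ 𝒜 g → y ∈ 𝒜 g → z ∈ 𝒜 g →
      (∃ r s : R, r ∈ 𝒜 0 ∧ s ∈ 𝒜 0 ∧ x * r * y * s * z ≠ 0) →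
      (∀ r s : R, r ∈ 𝒜 0 → s ∈ 𝒜 0 → x * r * y * s * z ∈ P) →
      x * y ∈ P ∨ y * z ∈ P ∨ x * z ∈ P

/-- `(x, y, z)` is a `g`-triple-zero of `P`: `x, y, z ∈ R_g`, `x R_e y R_e z = 0`,
`xy ∉ P`, `yz ∉ P` and `xz ∉ P`. -/
def IsGTripleZero (𝒜 : G → AddSubgroup R) (g : G) (P : TwoSidedIdeal R) (x y z : R) : Prop :=
  x ∈ 𝒜 g ∧ y ∈ 𝒜 g ∧ z ∈ 𝒜 g ∧
    (∀ r s : R, r ∈ 𝒜 0 → s ∈ 𝒜 0 → x * r * y * s * z = 0) ∧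
    x * y ∉ P ∧ y * z ∉ P ∧ x * z ∉ P

/-- Lemmas 4.16(4),(5),(6): if `(x, y, z)` is a `g`-triple-zero of a `g`-weakly 2-absorbing
ideal `P`, then `P_g² z = {0}`, `x P_g² = {0}` and `P_g y P_g = {0}`. -/
theorem stmt14 (𝒜 : G → AddSubgroup R) [GradedRing 𝒜] (g : G) (P : TwoSidedIdeal R)
    (hP : IsGWeakly2Absorbing 𝒜 g P) (x y z : R) (htz : IsGTripleZero 𝒜 g P x y z) :
    (∀ p ∈ P, p ∈ 𝒜 g → ∀ q ∈ P, q ∈ 𝒜 g → p * q * z = 0) ∧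
    (∀ p ∈ P, p ∈ 𝒜 g → ∀ q ∈ P, q ∈ 𝒜 g → x * p * q = 0) ∧
    (∀ p ∈ P, p ∈ 𝒜 g → ∀ q ∈ P, q ∈ 𝒜 g → p * y * q = 0) := by
  obtain ⟨hx, hy, hz, h0, hxy, hyz, hxz⟩ := htz
  obtain ⟨-, -, habs⟩ := hP
  have h1 : (1 : R) ∈ 𝒜 0 := SetLike.one_mem_graded 𝒜
  -- Lemma A : x R_e y R_e P_g = 0
  have A : ∀ p ∈ P, p ∈ 𝒜 g → ∀ r ∈ 𝒜 0, ∀ s ∈ 𝒜 0, x * r * y * s * p = 0 := by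
    intro p hpP hpg r hr s hs
    by_contra hne
    have key : ∀ r s : R, r ∈ 𝒜 0 → s ∈ 𝒜 0 → x * r * y * s * (z + p) = x * r * y * s * p := by
      intro r s hr hs; rw [mul_add, h0 r s hr hs, zero_add]
    rcases habs x y (z + p) hx hy (AddSubgroup.add_mem _ hz hpg)
        ⟨r, s, hr, hs, by rw [key r s hr hs]; exact hne⟩
        (fun r s hr hs => by rw [key r s hr hs]; exact P.mul_mem_left _ _ hpP)
        with h | h | h
    · exact hxy h
    · refine hyz ?_
      have e : y * z = y * (z + p) - y * p := by noncomm_ring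
      rw [e]; exact P.sub_mem h (P.mul_mem_left _ _ hpP)
    · refine hxz ?_
      have e : x * z = x * (z + p) - x * p := by noncomm_ring
      rw [e]; exact P.sub_mem h (P.mul_mem_left _ _ hpP)
  -- Lemma B : x R_e P_g R_e z = 0
  have B : ∀ p ∈ P, p ∈ 𝒜 g → ∀ r ∈ 𝒜 0, ∀ s ∈ 𝒜 0, x * r * p * s * z = 0 := by
    intro p hpP hpg r hr s hs
    by_contra hne
    have key : ∀ r s : R, r ∈ 𝒜 0 → s ∈ 𝒜 0 →
        x * r * (y + p) * s * z = x * r * p * s * z := by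
      intro r s hr hs
      have e : x * r * (y + p) * s * z = x * r * y * s * z + x * r * p * s * z := by
        noncomm_ring
      rw [e, h0 r s hr hs, zero_add]
    rcases habs x (y + p) z hx (AddSubgroup.add_mem _ hy hpg) hz
        ⟨r, s, hr, hs, by rw [key r s hr hs]; exact hne⟩
        (fun r s hr hs => by
          rw [key r s hr hs]
          have e : x * r * p * s * z = (x * r) * (p * (s * z)) := by noncomm_ring
          rw [e]
          exact P.mul_mem_left _ _ (P.mul_mem_right _ _ hpP))
        with h | h | h
    · refine hxy ?_
      have e : x * y = x * (y + p) - x * p := by noncomm_ring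
      rw [e]; exact P.sub_mem h (P.mul_mem_left _ _ hpP)
    · refine hyz ?_
      have e : y * z = (y + p) * z - p * z := by noncomm_ring
      rw [e]; exact P.sub_mem h (P.mul_mem_right _ _ hpP)
    · exact hxz h
  -- Lemma C : P_g R_e y R_e z = 0
  have C : ∀ p ∈ P, p ∈ 𝒜 g → ∀ r ∈ 𝒜 0, ∀ s ∈ 𝒜 0, p * r * y * s * z = 0 := by
    intro p hpP hpg r hr s hs
    by_contra hne
    have key : ∀ r s : R, r ∈ 𝒜 0 → s ∈ 𝒜 0 →
        (x + p) * r * y * s * z = p * r * y * s * z := by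
      intro r s hr hs
      have e : (x + p) * r * y * s * z = x * r * y * s * z + p * r * y * s * z := by
        noncomm_ring
      rw [e, h0 r s hr hs, zero_add]
    rcases habs (x + p) y z (AddSubgroup.add_mem _ hx hpg) hy hz
        ⟨r, s, hr, hs, by rw [key r s hr hs]; exact hne⟩
        (fun r s hr hs => by
          rw [key r s hr hs]
          have e2 : p * r * y * s * z = p * (r * (y * (s * z))) := by noncomm_ring
          rw [e2]; exact P.mul_mem_right _ _ hpP)
        with h | h | h
    · refine hxy ?_
      have e : x * y = (x + p) * y - p * y := by noncomm_ring
      rw [e]; exact P.sub_mem h (P.mul_mem_right _ _ hpP)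
    · exact hyz h
    · refine hxz ?_
      have e : x * z = (x + p) * z - p * z := by noncomm_ring
      rw [e]; exact P.sub_mem h (P.mul_mem_right _ _ hpP)
  refine ⟨?_, ?_, ?_⟩
  · -- P_g² z = 0
    intro p hpP hpg q hqP hqg
    by_contra hne
    have key : ∀ r s : R, r ∈ 𝒜 0 → s ∈ 𝒜 0 →
        (x + p) * r * (y + q) * s * z = p * r * q * s * z := by
      intro r s hr hs
      have e : (x + p) * r * (y + q) * s * z = x * r * y * s * z + x * r * q * s * z
          + p * r * y * s * z + p * r * q * s * z := by noncomm_ring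
      rw [e, h0 r s hr hs, B q hqP hqg r hr s hs, C p hpP hpg r hr s hs]
      simp
    rcases habs (x + p) (y + q) z (AddSubgroup.add_mem _ hx hpg)
        (AddSubgroup.add_mem _ hy hqg) hz
        ⟨1, 1, h1, h1, by rw [key 1 1 h1 h1]; simpa using hne⟩
        (fun r s hr hs => by
          rw [key r s hr hs]
          have e2 : p * r * q * s * z = p * (r * (q * (s * z))) := by noncomm_ring
          rw [e2]; exact P.mul_mem_right _ _ hpP)
        with h | h | h
    · refine hxy ?_
      have e : x * y = (x + p) * (y + q) - x * q - p * y - p * q := by noncomm_ring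
      rw [e]
      exact P.sub_mem (P.sub_mem (P.sub_mem h (P.mul_mem_left _ _ hqP))
        (P.mul_mem_right _ _ hpP)) (P.mul_mem_right _ _ hpP)
    · refine hyz ?_
      have e : y * z = (y + q) * z - q * z := by noncomm_ring
      rw [e]; exact P.sub_mem h (P.mul_mem_right _ _ hqP)
    · refine hxz ?_
      have e : x * z = (x + p) * z - p * z := by noncomm_ring
      rw [e]; exact P.sub_mem h (P.mul_mem_right _ _ hpP)
  · -- x P_g² = 0
    intro p hpP hpg q hqP hqg
    by_contra hne
    have key : ∀ r s : R, r ∈ 𝒜 0 → s ∈ 𝒜 0 →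
        x * r * (y + p) * s * (z + q) = x * r * p * s * q := by
      intro r s hr hs
      have e : x * r * (y + p) * s * (z + q) = x * r * y * s * z + x * r * y * s * q
          + x * r * p * s * z + x * r * p * s * q := by noncomm_ring
      rw [e, h0 r s hr hs, A q hqP hqg r hr s hs, B p hpP hpg r hr s hs]
      simp
    rcases habs x (y + p) (z + q) hx (AddSubgroup.add_mem _ hy hpg)
        (AddSubgroup.add_mem _ hz hqg)
        ⟨1, 1, h1, h1, by rw [key 1 1 h1 h1]; simpa using hne⟩
        (fun r s hr hs => by rw [key r s hr hs]; exact P.mul_mem_left _ _ hqP)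
        with h | h | h
    · refine hxy ?_
      have e : x * y = x * (y + p) - x * p := by noncomm_ring
      rw [e]; exact P.sub_mem h (P.mul_mem_left _ _ hpP)
    · refine hyz ?_
      have e : y * z = (y + p) * (z + q) - y * q - p * z - p * q := by noncomm_ring
      rw [e]
      exact P.sub_mem (P.sub_mem (P.sub_mem h (P.mul_mem_left _ _ hqP))
        (P.mul_mem_right _ _ hpP)) (P.mul_mem_right _ _ hpP)
    · refine hxz ?_
      have e : x * z = x * (z + q) - x * q := by noncomm_ring
      rw [e]; exact P.sub_mem h (P.mul_mem_left _ _ hqP)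
  · -- P_g y P_g = 0
    intro p hpP hpg q hqP hqg
    by_contra hne
    have key : ∀ r s : R, r ∈ 𝒜 0 → s ∈ 𝒜 0 →
        (x + p) * r * y * s * (z + q) = p * r * y * s * q := by
      intro r s hr hs
      have e : (x + p) * r * y * s * (z + q) = x * r * y * s * z + x * r * y * s * q
          + p * r * y * s * z + p * r * y * s * q := by noncomm_ring
      rw [e, h0 r s hr hs, A q hqP hqg r hr s hs, C p hpP hpg r hr s hs]
      simp
    rcases habs (x + p) y (z + q) (AddSubgroup.add_mem _ hx hpg) hy
        (AddSubgroup.add_mem _ hz hqg)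
        ⟨1, 1, h1, h1, by rw [key 1 1 h1 h1]; simpa using hne⟩
        (fun r s hr hs => by
          rw [key r s hr hs]
          have e2 : p * r * y * s * q = p * (r * (y * (s * q))) := by noncomm_ring
          rw [e2]; exact P.mul_mem_right _ _ hpP)
        with h | h | h
    · refine hxy ?_
      have e : x * y = (x + p) * y - p * y := by noncomm_ring
      rw [e]; exact P.sub_mem h (P.mul_mem_right _ _ hpP)
    · refine hyz ?_
      have e : y * z = y * (z + q) - y * q := by noncomm_ring
      rw [e]; exact P.sub_mem h (P.mul_mem_left _ _ hqP)
    · refine hxz ?_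
      have e : x * z = (x + p) * (z + q) - x * q - p * z - p * q := by noncomm_ring
      rw [e]
      exact P.sub_mem (P.sub_mem (P.sub_mem h (P.mul_mem_left _ _ hqP))
        (P.mul_mem_right _ _ hpP)) (P.mul_mem_right _ _ hpP)
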